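/- In the pessimistic 3-SAT reduction PG (Lemma 2, second part, profile (f,f,f)): the profile in which all three followers play f is never a Nash equilibrium, because follower 1 receives total utility 0 in (f,f,f) (she gets 0 against the leader and 0 against followers 2 and 3), while deviating to any non-f action a yields utility at least U_{1,2}(a,f) + U_{1,3}(a,f) = 1 + 1 = 2 ≥ payoff against the leader ≥ 0, hence strictly positive total utility. -/
import Mathlib


variable {r : ℕ} {ClauseAct : Type}

/-- Expected utility of follower `p` playing the clause-assignment action `b`
against the leader strategy `sn` over `{a_{v_1},...,a_{v_r}, a_w}` (`none` is
`a_w`): if the `p`-th literal of `b` is positive with variable `v` the payoff is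
`1` on `a_v` and `0` elsewhere; if negative, `0` on `a_v` and `1` elsewhere. -/
noncomputable def uLn (lit : ClauseAct → Fin 3 → Fin r × Bool)
    (sn : Option (Fin r) → ℝ) (p : Fin 3) (b : ClauseAct) : ℝ :=
  if (lit b p).2 = true then sn (some (lit b p).1) else 1 - sn (some (lit b p).1)

/-- Payoff of follower `p` against follower `q` in the pessimistic 3-SAT
reduction (`none` is the action `f`). -/
noncomputable def pairPayPes (r : ℕ) {ClauseAct : Type} [DecidableEq ClauseAct]
    (lit : ClauseAct → Fin 3 → Fin r × Bool) (p q : Fin 3) :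
    Option ClauseAct → Option ClauseAct → ℝ
  | some b, some b' => if b = b' then 0 else -1
  | none, none => if p < q then 0 else 1
  | none, some b' =>
      if p < q then
        (if (lit b' p).2 = true then 1 / (2 * ((r : ℝ) + 1))
         else (r : ℝ) / (2 * ((r : ℝ) + 1)))
      else 0
  | some b, none =>
      if p < q then 1
      else
        (if (lit b p).2 = true then 1 / (2 * ((r : ℝ) + 1))
         else (r : ℝ) / (2 * ((r : ℝ) + 1)))

/-- Total utility of follower `p` in profile `σ`, given leader strategy `sn`. -/
noncomputable def totUPes (r : ℕ) {ClauseAct : Type} [DecidableEq ClauseAct]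
    (lit : ClauseAct → Fin 3 → Fin r × Bool) (sn : Option (Fin r) → ℝ)
    (σ : Fin 3 → Option ClauseAct) (p : Fin 3) : ℝ :=
  (match σ p with
    | none => 0
    | some b => uLn lit sn p b) +
  ∑ q ∈ Finset.univ.erase p, pairPayPes r lit p q (σ p) (σ q)


/-- Lemma 2, profile `(f,f,f)`: the all-`f` profile is never a Nash equilibrium:
follower 1 (index `0`) gets total utility `0`, while deviating to any non-`f`
action yields at least `2`, hence strictly positive utility. -/
theorem stmt_14 (r : ℕ) (ClauseAct : Type) [DecidableEq ClauseAct]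
    [Nonempty ClauseAct]
    (lit : ClauseAct → Fin 3 → Fin r × Bool)
    (sn : Option (Fin r) → ℝ) (hsn : sn ∈ stdSimplex ℝ (Option (Fin r))) :
    totUPes r lit sn (fun _ => none) 0 = 0 ∧
    (∀ b : ClauseAct,
      totUPes r lit sn (Function.update (fun _ => none) (0 : Fin 3) (some b)) 0
        ≥ 2) ∧
    (∀ b : ClauseAct,
      totUPes r lit sn (Function.update (fun _ => none) (0 : Fin 3) (some b)) 0
        > totUPes r lit sn (fun _ => none) 0) := by
  obtain ⟨hnn, hsum⟩ := hsn
  have hle : ∀ x, sn x ≤ 1 := by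
    intro x
    rw [← hsum]
    exact Finset.single_le_sum (fun i _ => hnn i) (Finset.mem_univ x)
  have herase : (Finset.univ.erase (0 : Fin 3)) = {1, 2} := by decide
  have h0 : totUPes r lit sn (fun _ => none) 0 = 0 := by
    simp [totUPes, herase, pairPayPes]
  have h2 : ∀ b, totUPes r lit sn
      (Function.update (fun _ => none) (0 : Fin 3) (some b)) 0 ≥ 2 := by
    intro b
    have h1 : uLn lit sn 0 b ≥ 0 := by
      unfold uLn; split
      · exact hnn _
      · linarith [hle (some (lit b 0).1)]
    simp only [totUPes, herase, Function.update, Finset.sum_insert, Finset.mem_singleton,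
      Finset.sum_singleton]
    rw [Finset.sum_pair (by decide : (1 : Fin 3) ≠ 2)]
    simp [pairPayPes, show (1 : Fin 3) ≠ 0 from by decide,
      show (2 : Fin 3) ≠ 0 from by decide, show (0 : Fin 3) < 1 from by decide,
      show (0 : Fin 3) < 2 from by decide]
    linarith
  exact ⟨h0, h2, fun b => by rw [h0]; linarith [h2 b]⟩
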